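/- Let λ > 0 and p > 0. Then the complex-valued integrals over the real line satisfy ∫_{−∞}^{∞} e^{−λu²}/(u + i·p) du = −π·i·e^{λp²}·erfc(√λ·p) and ∫_{−∞}^{∞} e^{−λu²}/(u − i·p) du = π·i·e^{λp²}·erfc(√λ·p). -/

import Mathlib

/-!
Pairing `u` with `-u` turns `1 / (u ± i p)` into `∓ i p / (u² + p²)`, so both integrals reduce to
`∫ e^{-λu²} / (u² + p²) du`. Writing `e^{-λ(u² + p²)} / (u² + p²)` as a multiple of
`∫_{t > √λ p} t e^{-t²(u² + p²)/p²} dt` and exchanging the order of integration, the inner Gaussian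
integral in `u` is `√π p e^{-t²}`, which leaves the Gaussian tail defining `erfc`.
-/

open Real MeasureTheory

/-- The complementary error function erfc(y) := (2/√π)·∫_y^∞ e^{−t²} dt. -/
noncomputable def erfc (y : ℝ) : ℝ :=
  2 / Real.sqrt Real.pi * ∫ t in Set.Ioi y, Real.exp (-t ^ 2)

open Set Filter Topology

theorem integral_Ioi_mul_exp_neg_mul_sq {b : ℝ} (hb : 0 < b) (a : ℝ) :
    ∫ t in Ioi a, t * rexp (-b * t ^ 2) = rexp (-b * a ^ 2) / (2 * b) := by
  have hderiv (t : ℝ) :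
      HasDerivAt (fun t => -(2 * b)⁻¹ * rexp (-b * t ^ 2)) (t * rexp (-b * t ^ 2)) t := by
    refine (((hasDerivAt_pow 2 t).const_mul (-b)).exp.const_mul (-(2 * b)⁻¹)).congr_deriv ?_
    field_simp
    ring
  have hlim : Tendsto (fun t => -(2 * b)⁻¹ * rexp (-b * t ^ 2)) atTop (𝓝 0) := by
    simpa using (tendsto_exp_atBot.comp ((tendsto_pow_atTop two_ne_zero).const_mul_atTop_of_neg
      (neg_lt_zero.2 hb))).const_mul (-(2 * b)⁻¹)
  rw [integral_Ioi_of_hasDerivAt_of_tendsto' (fun t _ => hderiv t)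
    (integrable_mul_exp_neg_mul_sq hb).integrableOn hlim]
  ring

theorem integral_exp_neg_mul_sq_add_sq_div_eq_integral_Ioi {lam p : ℝ} (hlam : 0 ≤ lam)
    (hp : 0 < p) :
    ∫ u, rexp (-lam * (u ^ 2 + p ^ 2)) / (u ^ 2 + p ^ 2)
      = 2 * √π / p * ∫ t in Ioi (√lam * p), rexp (-t ^ 2) := by
  set a := √lam * p
  set F : ℝ → ℝ → ℝ := fun u t => t * rexp (-((u ^ 2 + p ^ 2) / p ^ 2) * t ^ 2)
  have hF_split (u t : ℝ) : F u t = t * rexp (-t ^ 2) * rexp (-(t / p) ^ 2 * u ^ 2) := by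
    simp only [F, mul_assoc, ← exp_add]
    field_simp
    ring_nf
  have ht_pos {t : ℝ} (ht : t ∈ Ioi a) : 0 < t := lt_of_le_of_lt (by positivity) ht
  have hF_integral_t (u : ℝ) :
      ∫ t in Ioi a, F u t = p ^ 2 / 2 * (rexp (-lam * (u ^ 2 + p ^ 2)) / (u ^ 2 + p ^ 2)) := by
    rw [integral_Ioi_mul_exp_neg_mul_sq (by positivity), mul_pow, sq_sqrt hlam]
    field_simp
  have hF_integral_u {t : ℝ} (ht : t ∈ Ioi a) : ∫ u, F u t = √π * p * rexp (-t ^ 2) := by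
    simp_rw [hF_split, integral_const_mul, integral_gaussian, sqrt_div' _ (sq_nonneg _),
      sqrt_sq (div_pos (ht_pos ht) hp).le]
    field_simp [(ht_pos ht).ne']
  have hF_integrable : Integrable (Function.uncurry F) (volume.prod (volume.restrict (Ioi a))) := by
    refine (integrable_prod_iff' (by fun_prop)).2 ⟨?_, ?_⟩
    · filter_upwards [ae_restrict_mem measurableSet_Ioi] with t ht
      simp_rw [Function.uncurry_apply_pair, hF_split]
      exact (integrable_exp_neg_mul_sq (by have := ht_pos ht; positivity)).const_mul _
    · refine (((integrable_exp_neg_mul_sq one_pos).integrableOn).const_mul (√π * p)).congr ?_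
      filter_upwards [ae_restrict_mem measurableSet_Ioi] with t ht
      have hnorm (u : ℝ) : ‖Function.uncurry F (u, t)‖ = F u t :=
        norm_of_nonneg (mul_nonneg (ht_pos ht).le (exp_pos _).le)
      simp_rw [hnorm, hF_integral_u ht, neg_one_mul]
  calc ∫ u, rexp (-lam * (u ^ 2 + p ^ 2)) / (u ^ 2 + p ^ 2)
      = 2 / p ^ 2 * ∫ u, ∫ t in Ioi a, F u t := by
        simp_rw [hF_integral_t, integral_const_mul]
        field_simp
    _ = 2 / p ^ 2 * ∫ t in Ioi a, ∫ u, F u t := by rw [integral_integral_swap hF_integrable]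
    _ = 2 / p ^ 2 * ∫ t in Ioi a, √π * p * rexp (-t ^ 2) := by
        rw [setIntegral_congr_fun measurableSet_Ioi fun t ht => hF_integral_u ht]
    _ = 2 * √π / p * ∫ t in Ioi a, rexp (-t ^ 2) := by
        rw [integral_const_mul]
        field_simp

theorem integral_exp_neg_mul_sq_div_sq_add_sq {lam p : ℝ} (hlam : 0 ≤ lam) (hp : 0 < p) :
    ∫ u, rexp (-lam * u ^ 2) / (u ^ 2 + p ^ 2) = π / p * rexp (lam * p ^ 2) * erfc (√lam * p) := by
  have h := integral_exp_neg_mul_sq_add_sq_div_eq_integral_Ioi hlam hp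
  have hsplit (u : ℝ) : rexp (-lam * (u ^ 2 + p ^ 2)) / (u ^ 2 + p ^ 2)
      = rexp (-lam * p ^ 2) * (rexp (-lam * u ^ 2) / (u ^ 2 + p ^ 2)) := by
    rw [mul_add, exp_add]
    ring
  simp_rw [hsplit, integral_const_mul] at h
  rw [erfc]
  generalize (∫ u, rexp (-lam * u ^ 2) / (u ^ 2 + p ^ 2)) = J at h ⊢
  generalize (∫ t in Ioi (√lam * p), rexp (-t ^ 2)) = E at h ⊢
  calc J = rexp (lam * p ^ 2) * (rexp (-lam * p ^ 2) * J) := by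
        rw [← mul_assoc, ← exp_add, neg_mul, add_neg_cancel, exp_zero, one_mul]
    _ = π / p * rexp (lam * p ^ 2) * (2 / √π * E) := by
        rw [h]
        field_simp
        rw [sq_sqrt pi_pos.le, mul_comm]

open Complex in
theorem integrable_cexp_neg_mul_sq_div_add_I_mul {b : ℂ} (hb : 0 < b.re) {p : ℝ} (hp : p ≠ 0) :
    Integrable fun u : ℝ => cexp (-b * u ^ 2) / (u + I * p) := by
  refine (integrable_cexp_neg_mul_sq hb).mul_bdd (c := |p|⁻¹) (by fun_prop)
    (ae_of_all _ fun u => ?_)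
  rw [norm_inv]
  refine inv_anti₀ (abs_pos.2 hp) ?_
  simpa using abs_im_le_norm ((u : ℂ) + I * p)

open Complex in
theorem integral_div_add_I_mul_of_even {φ : ℝ → ℂ} (hφ : ∀ u, φ (-u) = φ u) {p : ℝ} (hp : p ≠ 0)
    (hint : Integrable fun u : ℝ => φ u / (u + I * p)) :
    ∫ u : ℝ, φ u / (u + I * p) = -I * p * ∫ u : ℝ, φ u / (u ^ 2 + p ^ 2) := by
  have hsym (u : ℝ) : φ u / (u + I * p) + φ (-u) / (↑(-u) + I * p)
      = 2 * (-I * p * (φ u / (u ^ 2 + p ^ 2))) := by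
    have h1 : (u : ℂ) + I * p ≠ 0 := fun h => hp (by simpa using congrArg im h)
    have h2 : -(u : ℂ) + I * p ≠ 0 := fun h => hp (by simpa using congrArg im h)
    have h3 : (u : ℂ) ^ 2 + p ^ 2 ≠ 0 := by exact_mod_cast (by positivity : u ^ 2 + p ^ 2 ≠ 0)
    rw [hφ, ofReal_neg]
    field_simp
    linear_combination (2 * φ u * I * p ^ 3) * I_sq
  have := integral_add hint hint.comp_neg
  rw [integral_neg_eq_self (fun u : ℝ => φ u / (u + I * p)), ← two_mul] at this
  simp_rw [hsym, integral_const_mul] at this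
  exact mul_left_cancel₀ two_ne_zero this.symm

/-- For λ > 0 and p > 0,
    ∫_{−∞}^{∞} e^{−λu²}/(u + i·p) du = −π·i·e^{λp²}·erfc(√λ·p) and
    ∫_{−∞}^{∞} e^{−λu²}/(u − i·p) du = π·i·e^{λp²}·erfc(√λ·p). -/
theorem stmt_3 (lam p : ℝ) (hlam : 0 < lam) (hp : 0 < p) :
    (∫ u : ℝ, Complex.exp (-(lam : ℂ) * (u : ℂ) ^ 2) / ((u : ℂ) + Complex.I * (p : ℂ)))
        = -(Real.pi : ℂ) * Complex.I * Complex.exp ((lam : ℂ) * (p : ℂ) ^ 2) *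
            (erfc (Real.sqrt lam * p) : ℂ) ∧
    (∫ u : ℝ, Complex.exp (-(lam : ℂ) * (u : ℂ) ^ 2) / ((u : ℂ) - Complex.I * (p : ℂ)))
        = (Real.pi : ℂ) * Complex.I * Complex.exp ((lam : ℂ) * (p : ℂ) ^ 2) *
            (erfc (Real.sqrt lam * p) : ℂ) := by
  set φ : ℝ → ℂ := fun u => Complex.exp (-(lam : ℂ) * (u : ℂ) ^ 2)
  have hφ_even (u : ℝ) : φ (-u) = φ u := by simp [φ]
  have hφ_integrable {q : ℝ} (hq : q ≠ 0) :=
    integrable_cexp_neg_mul_sq_div_add_I_mul (b := lam) (by simpa using hlam) hq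
  have hφ_integral : ∫ u : ℝ, φ u / ((u : ℂ) ^ 2 + (p : ℂ) ^ 2)
      = (π / p * rexp (lam * p ^ 2) * erfc (√lam * p) : ℝ) := by
    rw [← integral_exp_neg_mul_sq_div_sq_add_sq hlam.le hp, ← integral_complex_ofReal]
    push_cast [φ, Complex.ofReal_exp]
    rfl
  have hp' : (p : ℂ) ≠ 0 := by exact_mod_cast hp.ne'
  constructor
  · rw [integral_div_add_I_mul_of_even hφ_even hp.ne' (hφ_integrable hp.ne'), hφ_integral]
    push_cast
    field_simp
  · have h := integral_div_add_I_mul_of_even hφ_even (neg_ne_zero.2 hp.ne')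
      (hφ_integrable (neg_ne_zero.2 hp.ne'))
    simp only [Complex.ofReal_neg, mul_neg, ← sub_eq_add_neg, neg_sq] at h
    rw [h, hφ_integral]
    push_cast
    field_simp
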